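/- Let μ and ν be Borel probability measures on ℝ with finite first moment. Then the 1-Wasserstein distance between μ and ν equals the L^1(ℝ)-distance between their cumulative distribution functions: W_1(μ,ν) = ∫_ℝ |F_μ(x) − F_ν(x)| dx. -/

import Mathlib

open MeasureTheory Set

/-- A coupling of two Borel probability measures on `ℝ` is a measure on `ℝ × ℝ`
whose first marginal is `μ` and whose second marginal is `ν`. -/
def IsCoupling (μ ν : Measure ℝ) (π : Measure (ℝ × ℝ)) : Prop :=
  π.map Prod.fst = μ ∧ π.map Prod.snd = ν

/-- The `1`-Wasserstein distance, defined as the infimum of transport costs over couplings. -/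
noncomputable def W1 (μ ν : Measure ℝ) : ℝ :=
  ⨅ π : {π : Measure (ℝ × ℝ) // IsCoupling μ ν π}, ∫ q, |q.1 - q.2| ∂(π.1)

/-- The cumulative distribution function `F_μ(x) = μ((-∞, x])`. -/
noncomputable def cdf' (μ : Measure ℝ) (x : ℝ) : ℝ := (μ (Set.Iic x)).toReal

/-!
By the layer-cake formula, `|x - y|` is the length of the set of levels `t` separating `x` and
`y`, i.e. at which exactly one of `x ≤ t`, `y ≤ t` holds. Hence the cost of a coupling `π` is
`∫ π({X ≤ t} ∆ {Y ≤ t}) dt ≥ ∫ |F_μ(t) - F_ν(t)| dt`. Equality holds for the comonotone coupling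
`(F_μ⁻¹(U), F_ν⁻¹(U))` with `U` uniform on `(0, 1)`, for which `{X ≤ t} ∆ {Y ≤ t}` is
`{U ≤ F_μ(t)} ∆ {U ≤ F_ν(t)}`. Finite first moments make every cost finite, so the comparison
passes from `ℝ≥0∞`-valued to real integrals.
-/

open ProbabilityTheory
open scoped symmDiff

namespace Set

lemma Ici_symmDiff_Ici {α : Type*} [LinearOrder α] (a b : α) :
    Ici a ∆ Ici b = Ico (min a b) (max a b) := by
  ext x
  simp only [mem_symmDiff, mem_Ici, mem_Ico, min_le_iff, lt_max_iff]
  grind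

lemma Iic_symmDiff_Iic {α : Type*} [LinearOrder α] (a b : α) :
    Iic a ∆ Iic b = Ioc (min a b) (max a b) := by
  ext x
  simp only [mem_symmDiff, mem_Iic, mem_Ioc, min_lt_iff, le_max_iff]
  grind

end Set

lemma lintegral_ofReal_abs_sub_eq_lintegral_measure_symmDiff (π : Measure (ℝ × ℝ)) [SFinite π] :
    ∫⁻ p, ENNReal.ofReal |p.1 - p.2| ∂π
      = ∫⁻ t, π ((Prod.fst ⁻¹' Iic t) ∆ (Prod.snd ⁻¹' Iic t)) := by
  set S : Set ((ℝ × ℝ) × ℝ) := {q | q.1.1 ≤ q.2} ∆ {q | q.1.2 ≤ q.2}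
  have hS : MeasurableSet S :=
    (measurableSet_le (by fun_prop) (by fun_prop)).symmDiff
      (measurableSet_le (by fun_prop) (by fun_prop))
  calc ∫⁻ p, ENNReal.ofReal |p.1 - p.2| ∂π
      = ∫⁻ p, volume (Prod.mk p ⁻¹' S) ∂π := by
        refine lintegral_congr fun p => ?_
        rw [preimage_symmDiff]
        change _ = volume (Ici p.1 ∆ Ici p.2)
        rw [Ici_symmDiff_Ici, Real.volume_Ico, max_sub_min_eq_abs']
    _ = (π.prod volume) S := (Measure.prod_apply hS).symm
    _ = ∫⁻ t, π ((Prod.fst ⁻¹' Iic t) ∆ (Prod.snd ⁻¹' Iic t)) := Measure.prod_apply_symm hS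

namespace IsCoupling

variable {μ ν : Measure ℝ} {π : Measure (ℝ × ℝ)}

lemma isProbabilityMeasure [IsProbabilityMeasure μ] (h : IsCoupling μ ν π) :
    IsProbabilityMeasure π := by
  have : IsProbabilityMeasure (π.map Prod.fst) := h.1 ▸ ‹_›
  exact Measure.isProbabilityMeasure_of_map Prod.fst

lemma integrable_abs_sub (h : IsCoupling μ ν π) (hμ : Integrable (fun x => |x|) μ)
    (hν : Integrable (fun x => |x|) ν) : Integrable (fun p : ℝ × ℝ => |p.1 - p.2|) π := by
  rw [← h.1] at hμ
  rw [← h.2] at hν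
  exact ((hμ.comp_measurable measurable_fst).add (hν.comp_measurable measurable_snd)).mono'
    (by fun_prop) (ae_of_all _ fun p => by simpa using abs_sub p.1 p.2)

variable [IsProbabilityMeasure μ] [IsProbabilityMeasure ν]

lemma ofReal_abs_cdf_sub_le (h : IsCoupling μ ν π) (t : ℝ) :
    ENNReal.ofReal |cdf μ t - cdf ν t| ≤ π ((Prod.fst ⁻¹' Iic t) ∆ (Prod.snd ⁻¹' Iic t)) := by
  have := h.isProbabilityMeasure
  rw [cdf_eq_real, cdf_eq_real, ← h.1, ← h.2,
    map_measureReal_apply measurable_fst measurableSet_Iic,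
    map_measureReal_apply measurable_snd measurableSet_Iic]
  exact ENNReal.ofReal_le_of_le_toReal (abs_measureReal_sub_le_measureReal_symmDiff
    (measurable_fst measurableSet_Iic).nullMeasurableSet
    (measurable_snd measurableSet_Iic).nullMeasurableSet)

lemma lintegral_abs_cdf_sub_le (h : IsCoupling μ ν π) :
    ∫⁻ t, ENNReal.ofReal |cdf μ t - cdf ν t| ≤ ∫⁻ p, ENNReal.ofReal |p.1 - p.2| ∂π := by
  have := h.isProbabilityMeasure
  rw [lintegral_ofReal_abs_sub_eq_lintegral_measure_symmDiff]
  exact lintegral_mono h.ofReal_abs_cdf_sub_le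

end IsCoupling

lemma volume_Ioc_inter_Ioo_zero_one {a b : ℝ} (ha : 0 ≤ a) (hb : b ≤ 1) :
    volume (Ioc a b ∩ Ioo 0 1) = ENNReal.ofReal (b - a) :=
  le_antisymm ((measure_mono inter_subset_left).trans_eq Real.volume_Ioc)
    (Real.volume_Ioo.symm.trans_le (measure_mono fun _ hu =>
      ⟨Ioo_subset_Ioc_self hu, ha.trans_lt hu.1, hu.2.trans_le hb⟩))

/-- Only meaningful for `u ∈ Ioo 0 1`; elsewhere `sInf` may return a junk value. -/
noncomputable def quantile (μ : Measure ℝ) (u : ℝ) : ℝ := sInf {x | u ≤ cdf μ x}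

section Quantile

variable (μ : Measure ℝ)

lemma quantile_le_iff {u : ℝ} (hu : u ∈ Ioo 0 1) (t : ℝ) : quantile μ u ≤ t ↔ u ≤ cdf μ t := by
  have hne : {x | u ≤ cdf μ x}.Nonempty := ((tendsto_cdf_atTop μ).eventually_const_le hu.2).exists
  have hbdd : BddBelow {x | u ≤ cdf μ x} := by
    obtain ⟨x₀, hx₀⟩ := ((tendsto_cdf_atBot μ).eventually_lt_const hu.1).exists
    exact ⟨x₀, fun y hy => le_of_not_gt fun hyx => (hy.trans (monotone_cdf μ hyx.le)).not_gt hx₀⟩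
  refine ⟨fun h => ?_, fun h => csInf_le hbdd h⟩
  have h_right : ∀ t' > t, u ≤ cdf μ t' := fun t' ht' => by
    obtain ⟨y, hy, hyt⟩ := exists_lt_of_csInf_lt hne (h.trans_lt ht')
    exact hy.trans (monotone_cdf μ hyt.le)
  exact ge_of_tendsto ((cdf μ).right_continuous t |>.mono Ioi_subset_Ici_self)
    (eventually_nhdsWithin_of_forall h_right)

lemma monotoneOn_quantile : MonotoneOn (quantile μ) (Ioo 0 1) := fun _ hu _ hv huv =>
  (quantile_le_iff μ hu _).2 (huv.trans ((quantile_le_iff μ hv _).1 le_rfl))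

lemma aemeasurable_quantile : AEMeasurable (quantile μ) (volume.restrict (Ioo 0 1)) :=
  aemeasurable_restrict_of_monotoneOn measurableSet_Ioo (monotoneOn_quantile μ)

lemma quantile_preimage_Iic_inter_Ioo (t : ℝ) :
    quantile μ ⁻¹' Iic t ∩ Ioo 0 1 = Iic (cdf μ t) ∩ Ioo 0 1 := by
  ext u
  simp only [mem_inter_iff, mem_preimage, mem_Iic]
  exact ⟨fun ⟨h, hu⟩ => ⟨(quantile_le_iff μ hu t).1 h, hu⟩,
    fun ⟨h, hu⟩ => ⟨(quantile_le_iff μ hu t).2 h, hu⟩⟩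

lemma map_quantile [IsProbabilityMeasure μ] :
    (volume.restrict (Ioo 0 1)).map (quantile μ) = μ := by
  refine Measure.ext_of_Iic _ _ fun t => ?_
  rw [Measure.map_apply_of_aemeasurable (aemeasurable_quantile μ) measurableSet_Iic,
    Measure.restrict_apply' measurableSet_Ioo, quantile_preimage_Iic_inter_Ioo]
  have h_Ioc : Iic (cdf μ t) ∩ Ioo 0 1 = Ioc 0 (cdf μ t) ∩ Ioo 0 1 := by
    ext u
    simp only [mem_inter_iff, mem_Iic, mem_Ioc, mem_Ioo]
    tauto
  rw [h_Ioc, volume_Ioc_inter_Ioo_zero_one le_rfl (cdf_le_one μ t), sub_zero, ofReal_cdf]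

end Quantile

noncomputable def quantileCoupling (μ ν : Measure ℝ) : Measure (ℝ × ℝ) :=
  (volume.restrict (Ioo 0 1)).map fun u => (quantile μ u, quantile ν u)

section QuantileCoupling

variable (μ ν : Measure ℝ)

lemma aemeasurable_quantile_prodMk :
    AEMeasurable (fun u => (quantile μ u, quantile ν u)) (volume.restrict (Ioo 0 1)) :=
  (aemeasurable_quantile μ).prodMk (aemeasurable_quantile ν)

instance : IsFiniteMeasure (quantileCoupling μ ν) := by
  unfold quantileCoupling
  infer_instance

lemma quantileCoupling_symmDiff (t : ℝ) :
    quantileCoupling μ ν ((Prod.fst ⁻¹' Iic t) ∆ (Prod.snd ⁻¹' Iic t))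
      = ENNReal.ofReal |cdf μ t - cdf ν t| := by
  rw [quantileCoupling, Measure.map_apply_of_aemeasurable (aemeasurable_quantile_prodMk μ ν)
      ((measurable_fst measurableSet_Iic).symmDiff (measurable_snd measurableSet_Iic)),
    Measure.restrict_apply' measurableSet_Ioo, preimage_symmDiff, inter_symmDiff_distrib_right]
  change volume ((quantile μ ⁻¹' Iic t ∩ Ioo 0 1) ∆ (quantile ν ⁻¹' Iic t ∩ Ioo 0 1)) = _
  rw [quantile_preimage_Iic_inter_Ioo, quantile_preimage_Iic_inter_Ioo,
    ← inter_symmDiff_distrib_right, Iic_symmDiff_Iic,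
    volume_Ioc_inter_Ioo_zero_one (le_min (cdf_nonneg μ t) (cdf_nonneg ν t))
      (max_le (cdf_le_one μ t) (cdf_le_one ν t)), max_sub_min_eq_abs']

lemma lintegral_quantileCoupling :
    ∫⁻ p, ENNReal.ofReal |p.1 - p.2| ∂quantileCoupling μ ν
      = ∫⁻ t, ENNReal.ofReal |cdf μ t - cdf ν t| := by
  rw [lintegral_ofReal_abs_sub_eq_lintegral_measure_symmDiff]
  exact lintegral_congr (quantileCoupling_symmDiff μ ν)

variable [IsProbabilityMeasure μ] [IsProbabilityMeasure ν]

lemma isCoupling_quantileCoupling : IsCoupling μ ν (quantileCoupling μ ν) :=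
  ⟨(measurable_fst.aemeasurable.map_map_of_aemeasurable (aemeasurable_quantile_prodMk μ ν)).trans
      (map_quantile μ),
    (measurable_snd.aemeasurable.map_map_of_aemeasurable (aemeasurable_quantile_prodMk μ ν)).trans
      (map_quantile ν)⟩

end QuantileCoupling

lemma cdf'_eq_cdf (μ : Measure ℝ) [IsProbabilityMeasure μ] : cdf' μ = cdf μ :=
  funext fun x => (cdf_eq_real μ x).symm

/-- For Borel probability measures on `ℝ` with finite first moment, the `1`-Wasserstein
distance equals the `L¹(ℝ)` distance of the cumulative distribution functions. -/
theorem W1_eq_cdf_L1_dist (μ ν : Measure ℝ)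
    [IsProbabilityMeasure μ] [IsProbabilityMeasure ν]
    (hμ : Integrable (fun x => |x|) μ) (hν : Integrable (fun x => |x|) ν) :
    W1 μ ν = ∫ x : ℝ, |cdf' μ x - cdf' ν x| := by
  have h_cost (π : Measure (ℝ × ℝ)) :
      ∫ p, |p.1 - p.2| ∂π = (∫⁻ p, ENNReal.ofReal |p.1 - p.2| ∂π).toReal :=
    integral_eq_lintegral_of_nonneg_ae (ae_of_all _ fun _ => abs_nonneg _) (by fun_prop)
  have h_cdf : ∫ x, |cdf' μ x - cdf' ν x| = (∫⁻ t, ENNReal.ofReal |cdf μ t - cdf ν t|).toReal := by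
    rw [cdf'_eq_cdf, cdf'_eq_cdf]
    exact integral_eq_lintegral_of_nonneg_ae (ae_of_all _ fun _ => abs_nonneg _)
      ((monotone_cdf μ).measurable.sub (monotone_cdf ν).measurable).abs.aestronglyMeasurable
  have h_bdd : BddBelow (range fun π : {π // IsCoupling μ ν π} => ∫ p, |p.1 - p.2| ∂π.1) :=
    ⟨0, by rintro _ ⟨π, rfl⟩; exact integral_nonneg fun _ => abs_nonneg _⟩
  have : Nonempty {π // IsCoupling μ ν π} := ⟨⟨_, isCoupling_quantileCoupling μ ν⟩⟩
  rw [W1, h_cdf]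
  refine le_antisymm ?_ (le_ciInf fun π => ?_)
  · calc _ ≤ ∫ p, |p.1 - p.2| ∂quantileCoupling μ ν :=
          ciInf_le h_bdd ⟨_, isCoupling_quantileCoupling μ ν⟩
      _ = _ := by rw [h_cost, lintegral_quantileCoupling]
  · rw [h_cost]
    exact ENNReal.toReal_mono (π.2.integrable_abs_sub hμ hν).lintegral_lt_top.ne
      π.2.lintegral_abs_cdf_sub_le
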